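/- arXiv:1503.01438 — 3 statements merged into one kernel-verified Lean document; each statement's English description precedes it below -/
import Mathlib

section
/- For the fractional knapsack value O(T, b), and any item x ∉ T, the marginal gain O(T ∪ {x}, b) − O(T, b) is non-decreasing as a function of the budget b ≥ 0. -/
/-- The fractional knapsack value `O(T, b)`. -/
noncomputable def knap {U : Type*} (T : Finset U) (p w : U → ℝ) (b : ℝ) : ℝ :=
  sSup {v | ∃ q : U → ℝ, (∀ u, q u ∈ Set.Icc (0 : ℝ) 1) ∧
    (∑ u ∈ T, p u * q u) ≤ b ∧ v = ∑ u ∈ T, p u * q u * w u}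

/-!
`O(T, ·)` is concave on `[0, ∞)`: the supremum of a linear objective over a feasible region
that depends linearly on the budget. A solution for `T ∪ {x}` at budget `b` spends some
`y = p_x q_x` on `x`, and its restriction to `T` is feasible at budget `b - y`, so its value is at
most `y w_x + O(T, b - y)`. Concavity gives `O(T, b - y) - O(T, b) ≤ O(T, c - y) - O(T, c)`, and
spending the same `y` on `x` at budget `c` shows `y w_x + O(T, c - y) ≤ O(T ∪ {x}, c)`.
-/

open Finset Set
open scoped Pointwise

theorem ConcaveOn.add_le_add_of_le_of_add_eq {𝕜 β : Type*} [Field 𝕜] [LinearOrder 𝕜]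
    [IsStrictOrderedRing 𝕜] [AddCommGroup β] [PartialOrder β] [IsOrderedAddMonoid β]
    [Module 𝕜 β] {s : Set 𝕜} {f : 𝕜 → β} (hf : ConcaveOn 𝕜 s f)
    {x₁ x₂ x₃ x₄ : 𝕜} (h₁ : x₁ ∈ s) (h₄ : x₄ ∈ s) (h₁₂ : x₁ ≤ x₂) (h₂₄ : x₂ ≤ x₄)
    (hsum : x₁ + x₄ = x₂ + x₃) : f x₁ + f x₄ ≤ f x₂ + f x₃ := by
  rcases h₁₂.eq_or_lt with rfl | h₁₂
  · rw [add_left_cancel hsum]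
  have hd : 0 < x₄ - x₁ := by linarith
  -- `x₂` and `x₃` are the convex combinations of `x₁, x₄` with weights `(a, b)` and `(b, a)`.
  set a := (x₄ - x₂) / (x₄ - x₁)
  set b := (x₂ - x₁) / (x₄ - x₁)
  have ha : 0 ≤ a := div_nonneg (by linarith) hd.le
  have hb : 0 ≤ b := div_nonneg (by linarith) hd.le
  have hab : a + b = 1 := by
    rw [← add_div, div_eq_one_iff_eq hd.ne']; ring
  have hx₂ : a • x₁ + b • x₄ = x₂ := by simp only [smul_eq_mul, a, b]; field_simp; ring
  have hx₃ : b • x₁ + a • x₄ = x₃ := by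
    simp only [smul_eq_mul, a, b]; field_simp; linear_combination (x₄ - x₁) * hsum
  have h₂ := hf.2 h₁ h₄ ha hb hab
  have h₃ := hf.2 h₁ h₄ hb ha (by rw [add_comm, hab])
  rw [hx₂] at h₂
  rw [hx₃] at h₃
  calc f x₁ + f x₄ = (a • f x₁ + b • f x₄) + (b • f x₁ + a • f x₄) := by
        rw [add_add_add_comm, ← add_smul, ← add_smul, add_comm b, hab, one_smul, one_smul]
    _ ≤ f x₂ + f x₃ := add_le_add h₂ h₃

section Knapsack

variable {U : Type*} {T : Finset U} {p w : U → ℝ} {b v : ℝ}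

def knapValues (T : Finset U) (p w : U → ℝ) (b : ℝ) : Set ℝ :=
  {v | ∃ q : U → ℝ, (∀ u, q u ∈ Set.Icc (0 : ℝ) 1) ∧
    (∑ u ∈ T, p u * q u) ≤ b ∧ v = ∑ u ∈ T, p u * q u * w u}

theorem zero_mem_knapValues (hb : 0 ≤ b) : 0 ∈ knapValues T p w b :=
  ⟨0, fun _ => ⟨le_rfl, zero_le_one⟩, by simpa using hb, by simp⟩

theorem nonneg_of_mem_knapValues (hp : ∀ u, 0 ≤ p u) (hv : v ∈ knapValues T p w b) : 0 ≤ b := by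
  obtain ⟨q, hq, hb, -⟩ := hv
  exact (sum_nonneg fun u _ => mul_nonneg (hp u) (hq u).1).trans hb

theorem bddAbove_knapValues : BddAbove (knapValues T p w b) := by
  refine ⟨∑ u ∈ T, |p u * w u|, ?_⟩
  rintro v ⟨q, hq, -, rfl⟩
  refine sum_le_sum fun u _ => ?_
  calc p u * q u * w u = q u * (p u * w u) := by ring
    _ ≤ |q u * (p u * w u)| := le_abs_self _
    _ ≤ |p u * w u| := by
      rw [abs_mul, abs_of_nonneg (hq u).1]
      exact mul_le_of_le_one_left (abs_nonneg _) (hq u).2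

theorem le_knap (hv : v ∈ knapValues T p w b) : v ≤ knap T p w b :=
  le_csSup bddAbove_knapValues hv

theorem knap_le {a : ℝ} (hb : 0 ≤ b) (h : ∀ v ∈ knapValues T p w b, v ≤ a) :
    knap T p w b ≤ a :=
  csSup_le ⟨0, zero_mem_knapValues hb⟩ h

theorem mul_add_mul_mem_knapValues {s t b₁ b₂ v₁ v₂ : ℝ} (hs : 0 ≤ s) (ht : 0 ≤ t)
    (hst : s + t = 1) (hv₁ : v₁ ∈ knapValues T p w b₁) (hv₂ : v₂ ∈ knapValues T p w b₂) :
    s * v₁ + t * v₂ ∈ knapValues T p w (s * b₁ + t * b₂) := by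
  obtain ⟨q₁, hq₁, hb₁, rfl⟩ := hv₁
  obtain ⟨q₂, hq₂, hb₂, rfl⟩ := hv₂
  refine ⟨s • q₁ + t • q₂, fun u => ?_, ?_, ?_⟩
  · simp only [Pi.add_apply, Pi.smul_apply, smul_eq_mul]
    constructor
    · exact add_nonneg (mul_nonneg hs (hq₁ u).1) (mul_nonneg ht (hq₂ u).1)
    · nlinarith [(hq₁ u).2, (hq₂ u).2]
  · calc ∑ u ∈ T, p u * (s • q₁ + t • q₂) u
          = s * ∑ u ∈ T, p u * q₁ u + t * ∑ u ∈ T, p u * q₂ u := by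
          simp only [mul_sum, ← sum_add_distrib, Pi.add_apply, Pi.smul_apply, smul_eq_mul]
          exact sum_congr rfl fun u _ => by ring
      _ ≤ s * b₁ + t * b₂ := by gcongr
  · simp only [mul_sum, ← sum_add_distrib, Pi.add_apply, Pi.smul_apply, smul_eq_mul]
    exact sum_congr rfl fun u _ => by ring

theorem concaveOn_knap : ConcaveOn ℝ (Ici 0) (knap T p w) := by
  refine ⟨convex_Ici 0, fun b₁ hb₁ b₂ hb₂ s t hs ht hst => ?_⟩
  have hne₁ : (s • knapValues T p w b₁).Nonempty :=
    ⟨_, smul_mem_smul_set (zero_mem_knapValues hb₁)⟩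
  have hne₂ : (t • knapValues T p w b₂).Nonempty :=
    ⟨_, smul_mem_smul_set (zero_mem_knapValues hb₂)⟩
  calc s • knap T p w b₁ + t • knap T p w b₂
      = sSup (s • knapValues T p w b₁ + t • knapValues T p w b₂) := by
        rw [csSup_add hne₁ (bddAbove_knapValues.smul_of_nonneg hs)
          hne₂ (bddAbove_knapValues.smul_of_nonneg ht),
          Real.sSup_smul_of_nonneg hs, Real.sSup_smul_of_nonneg ht]
        rfl
    _ ≤ knap T p w (s • b₁ + t • b₂) := by
      refine csSup_le_csSup bddAbove_knapValues (hne₁.add hne₂) ?_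
      rintro _ ⟨_, ⟨v₁, hv₁, rfl⟩, _, ⟨v₂, hv₂, rfl⟩, rfl⟩
      exact mul_add_mul_mem_knapValues hs ht hst hv₁ hv₂

theorem mem_knapValues_insert [DecidableEq U] {x : U} (hx : x ∉ T) :
    v ∈ knapValues (insert x T) p w b ↔
      ∃ t ∈ Icc (0 : ℝ) 1, ∃ v' ∈ knapValues T p w (b - p x * t), v = p x * t * w x + v' := by
  constructor
  · rintro ⟨q, hq, hb, rfl⟩
    rw [sum_insert hx] at hb
    exact ⟨q x, hq x, _, ⟨q, hq, by linarith, rfl⟩, sum_insert hx⟩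
  · rintro ⟨t, ht, _, ⟨q, hq, hb, rfl⟩, rfl⟩
    have hT : ∀ f : U → ℝ → ℝ,
        ∑ u ∈ T, f u (Function.update q x t u) = ∑ u ∈ T, f u (q u) :=
      fun f => sum_congr rfl fun u hu => by
        rw [Function.update_of_ne (ne_of_mem_of_not_mem hu hx)]
    refine ⟨Function.update q x t, fun u => ?_, ?_, ?_⟩
    · rcases eq_or_ne u x with rfl | hux
      · simpa using ht
      · simpa [hux] using hq u
    · rw [sum_insert hx, Function.update_self, hT fun u c => p u * c]
      linarith
    · rw [sum_insert hx, Function.update_self, hT fun u c => p u * c * w u]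

theorem add_knap_le_knap_insert [DecidableEq U] {x : U} (hx : x ∉ T) {t : ℝ}
    (ht : t ∈ Icc (0 : ℝ) 1) (hb : 0 ≤ b - p x * t) :
    p x * t * w x + knap T p w (b - p x * t) ≤ knap (insert x T) p w b := by
  rw [← le_sub_iff_add_le']
  exact knap_le hb fun v hv =>
    le_sub_iff_add_le'.2 (le_knap ((mem_knapValues_insert hx).2 ⟨t, ht, v, hv, rfl⟩))

end Knapsack

theorem knap_marginal_gain_monotone_general {U : Type*} [DecidableEq U] (T : Finset U) (x : U)
    (hx : x ∉ T) (p w : U → ℝ)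
    (hp : ∀ u, p u ∈ Set.Ioc (0 : ℝ) 1)
    (b c : ℝ) (hb : 0 ≤ b) (hbc : b ≤ c) :
    knap (insert x T) p w b - knap T p w b ≤ knap (insert x T) p w c - knap T p w c := by
  have hp₀ : ∀ u, 0 ≤ p u := fun u => (hp u).1.le
  rw [sub_le_sub_iff, ← le_sub_iff_add_le]
  refine knap_le hb fun v hv => ?_
  obtain ⟨t, ht, v', hv', rfl⟩ := (mem_knapValues_insert hx).1 hv
  set y := p x * t
  have hy : 0 ≤ y := mul_nonneg (hp₀ x) ht.1
  have hyb : 0 ≤ b - y := nonneg_of_mem_knapValues hp₀ hv'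
  have hconcave := concaveOn_knap.add_le_add_of_le_of_add_eq (f := knap T p w)
    (x₂ := b) (x₃ := c - y) (mem_Ici.2 hyb) (mem_Ici.2 (hb.trans hbc)) (by linarith) hbc (by ring)
  have hinsert := add_knap_le_knap_insert (w := w) hx ht (by linarith : 0 ≤ c - y)
  linarith [le_knap hv']

/-- Lemma 1: for any item `x ∉ T`, the marginal gain
`O(T ∪ {x}, b) − O(T, b)` is non-decreasing in the budget `b ≥ 0`. -/
theorem knap_marginal_gain_monotone {U : Type*} [DecidableEq U] (T : Finset U) (x : U)
    (hx : x ∉ T) (p w : U → ℝ)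
    (hp : ∀ u, p u ∈ Set.Ioc (0 : ℝ) 1) (hw : ∀ u, 0 ≤ w u)
    (b c : ℝ) (hb : 0 ≤ b) (hbc : b ≤ c) :
    knap (insert x T) p w b - knap T p w b ≤ knap (insert x T) p w c - knap T p w c :=
  knap_marginal_gain_monotone_general T x hx p w hp b c hb hbc
end

section
/- For any fixed budget b ≥ 0, the fractional knapsack value function T ↦ O(T, b) is submodular: for all T ⊆ N(X) and distinct x, y ∉ T, O(T∪{x}, b) − O(T, b) ≥ O(T∪{x,y}, b) − O(T∪{y}, b). -/
/-- The Lagrangian dual objective. -/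
noncomputable def hdual {U : Type*} (S : Finset U) (p w : U → ℝ) (b l : ℝ) : ℝ :=
  l * b + ∑ u ∈ S, p u * max (w u - l) 0

/-- Weak LP duality for the fractional knapsack. -/
lemma knap_le_hdual {U : Type*} (S : Finset U) (p w : U → ℝ) (b : ℝ)
    (hp : ∀ u, 0 < p u) (hb : 0 ≤ b) {l : ℝ} (hl : 0 ≤ l) :
    knap S p w b ≤ hdual S p w b l := by
  have hpos : 0 ≤ hdual S p w b l := by
    have : 0 ≤ ∑ u ∈ S, p u * max (w u - l) 0 :=
      Finset.sum_nonneg fun u _ => mul_nonneg (hp u).le (le_max_right _ _)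
    have : 0 ≤ l * b := mul_nonneg hl hb
    unfold hdual; positivity
  refine Real.sSup_le ?_ hpos
  rintro v ⟨q, hq, hbud, rfl⟩
  have key : ∀ u ∈ S, p u * q u * w u ≤ p u * max (w u - l) 0 + l * (p u * q u) := by
    intro u _
    obtain ⟨hq0, hq1⟩ := hq u
    have h1 : p u * q u * (w u - l) ≤ p u * q u * max (w u - l) 0 :=
      mul_le_mul_of_nonneg_left (le_max_left _ _)
        (mul_nonneg (hp u).le hq0)
    have h2 : p u * q u * max (w u - l) 0 ≤ p u * 1 * max (w u - l) 0 := by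
      apply mul_le_mul_of_nonneg_right _ (le_max_right _ _)
      exact mul_le_mul_of_nonneg_left hq1 (hp u).le
    nlinarith
  calc ∑ u ∈ S, p u * q u * w u
      ≤ ∑ u ∈ S, (p u * max (w u - l) 0 + l * (p u * q u)) := Finset.sum_le_sum key
    _ = (∑ u ∈ S, p u * max (w u - l) 0) + l * ∑ u ∈ S, p u * q u := by
        rw [Finset.sum_add_distrib, Finset.mul_sum]
    _ ≤ (∑ u ∈ S, p u * max (w u - l) 0) + l * b := by
        have := mul_le_mul_of_nonneg_left hbud hl
        linarith
    _ = hdual S p w b l := by unfold hdual; ring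

lemma knap_bddAbove {U : Type*} (S : Finset U) (p w : U → ℝ) (b : ℝ)
    (hp : ∀ u, 0 < p u) (hw : ∀ u, 0 ≤ w u) :
    BddAbove {v | ∃ q : U → ℝ, (∀ u, q u ∈ Set.Icc (0 : ℝ) 1) ∧
      (∑ u ∈ S, p u * q u) ≤ b ∧ v = ∑ u ∈ S, p u * q u * w u} := by
  refine ⟨∑ u ∈ S, p u * w u, ?_⟩
  rintro v ⟨q, hq, _, rfl⟩
  apply Finset.sum_le_sum
  intro u _
  obtain ⟨hq0, hq1⟩ := hq u
  have h1 : p u * q u ≤ p u := by nlinarith [(hp u).le]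
  exact mul_le_mul_of_nonneg_right h1 (hw u)

/-- Strong LP duality (the nontrivial direction): some dual multiplier is attained. -/
lemma exists_hdual_le_knap {U : Type*} (S : Finset U) (p w : U → ℝ) (b : ℝ)
    (hp : ∀ u, 0 < p u) (hw : ∀ u, 0 ≤ w u) (hb : 0 ≤ b) :
    ∃ l, 0 ≤ l ∧ hdual S p w b l ≤ knap S p w b := by
  classical
  set C : Finset ℝ := insert 0 (S.image w) with hC
  have h0C : (0 : ℝ) ∈ C := Finset.mem_insert_self _ _
  have hCne : C.Nonempty := ⟨0, h0C⟩
  have hwC : ∀ u ∈ S, w u ∈ C := fun u hu =>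
    Finset.mem_insert_of_mem (Finset.mem_image_of_mem w hu)
  set D : Finset ℝ := C.filter (fun θ => ∑ u ∈ S.filter (fun u => θ < w u), p u ≤ b)
    with hDdef
  have hmaxD : C.max' hCne ∈ D := by
    rw [hDdef, Finset.mem_filter]
    refine ⟨Finset.max'_mem _ _, ?_⟩
    have : S.filter (fun u => C.max' hCne < w u) = ∅ := by
      rw [Finset.filter_eq_empty_iff]
      intro u hu
      exact not_lt.2 (Finset.le_max' C (w u) (hwC u hu))
    rw [this]; simpa using hb
  have hDne : D.Nonempty := ⟨_, hmaxD⟩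
  set l : ℝ := D.min' hDne with hldef
  have hlD : l ∈ D := Finset.min'_mem _ _
  have hlC : l ∈ C := (Finset.mem_filter.1 hlD).1
  have hA : ∑ u ∈ S.filter (fun u => l < w u), p u ≤ b := (Finset.mem_filter.1 hlD).2
  have hl0 : 0 ≤ l := by
    rcases Finset.mem_insert.1 hlC with h | h
    · exact h.ge
    · obtain ⟨u, _, hu⟩ := Finset.mem_image.1 h
      exact hu ▸ hw u
  set A : ℝ := ∑ u ∈ S.filter (fun u => l < w u), p u with hAdef
  -- the dual value at l, rewritten
  have hdual_eq : hdual S p w b l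
      = l * b + (∑ u ∈ S.filter (fun u => l < w u), p u * w u) - l * A := by
    have : ∑ u ∈ S, p u * max (w u - l) 0
        = ∑ u ∈ S.filter (fun u => l < w u), (p u * w u - l * p u) := by
      rw [Finset.sum_filter]
      apply Finset.sum_congr rfl
      intro u _
      by_cases h : l < w u
      · rw [if_pos h, max_eq_left (by linarith)]; ring
      · rw [if_neg h, max_eq_right (by push_neg at h; linarith), mul_zero]
    rw [hdual]
    rw [this, Finset.sum_sub_distrib, ← Finset.mul_sum, hAdef]
    ring
  by_cases hl_zero : l = 0
  · -- easy case: take q = indicator of positive weight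
    refine ⟨l, hl0, ?_⟩
    set q : U → ℝ := fun u => if l < w u then 1 else 0 with hqdef
    have hq01 : ∀ u, q u ∈ Set.Icc (0 : ℝ) 1 := by
      intro u; rw [hqdef]; dsimp only
      split <;> simp
    have hbud : ∑ u ∈ S, p u * q u ≤ b := by
      have : ∑ u ∈ S, p u * q u = A := by
        rw [hAdef, Finset.sum_filter]
        apply Finset.sum_congr rfl
        intro u _
        rw [hqdef]; dsimp only; split <;> simp
      rw [this]; exact hA
    have hval : ∑ u ∈ S, p u * q u * w u
        = ∑ u ∈ S.filter (fun u => l < w u), p u * w u := by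
      rw [Finset.sum_filter]
      apply Finset.sum_congr rfl
      intro u _
      rw [hqdef]; dsimp only; split <;> simp
    have hmem : (∑ u ∈ S, p u * q u * w u) ∈ {v | ∃ q : U → ℝ,
        (∀ u, q u ∈ Set.Icc (0 : ℝ) 1) ∧
        (∑ u ∈ S, p u * q u) ≤ b ∧ v = ∑ u ∈ S, p u * q u * w u} :=
      ⟨q, hq01, hbud, rfl⟩
    have hle := le_csSup (knap_bddAbove S p w b hp hw) hmem
    rw [hval] at hle
    rw [hdual_eq, knap]
    rw [hl_zero] at hle ⊢
    simpa using hle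
  · -- main case: l > 0, the threshold is a weight and mass above-or-equal exceeds b
    have hlpos : 0 < l := lt_of_le_of_ne hl0 (Ne.symm hl_zero)
    -- largest candidate strictly below l
    set C' : Finset ℝ := C.filter (fun θ => θ < l) with hC'def
    have h0C' : (0 : ℝ) ∈ C' := Finset.mem_filter.2 ⟨h0C, hlpos⟩
    have hC'ne : C'.Nonempty := ⟨0, h0C'⟩
    set θ' : ℝ := C'.max' hC'ne with hθ'def
    have hθ'C' : θ' ∈ C' := Finset.max'_mem _ _
    have hθ'C : θ' ∈ C := (Finset.mem_filter.1 hθ'C').1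
    have hθ'lt : θ' < l := (Finset.mem_filter.1 hθ'C').2
    have hθ'notD : θ' ∉ D := by
      intro hmem
      exact absurd (Finset.min'_le D θ' hmem) (not_le.2 hθ'lt)
    have hθ'gt : b < ∑ u ∈ S.filter (fun u => θ' < w u), p u := by
      by_contra h
      push_neg at h
      exact hθ'notD (Finset.mem_filter.2 ⟨hθ'C, h⟩)
    -- the filter over θ' equals the filter over (l ≤ w u)
    have hfilter_eq : S.filter (fun u => θ' < w u) = S.filter (fun u => l ≤ w u) := by
      apply Finset.filter_congr
      intro u hu
      constructor
      · intro h
        by_contra hcon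
        push_neg at hcon
        have hmem : w u ∈ C' := Finset.mem_filter.2 ⟨hwC u hu, hcon⟩
        have hle : w u ≤ θ' := Finset.le_max' C' (w u) hmem
        linarith
      · intro h
        linarith
    have hB : b < ∑ u ∈ S.filter (fun u => l ≤ w u), p u := by
      rwa [hfilter_eq] at hθ'gt
    -- split the ≤ filter into < and =
    set Bm : ℝ := ∑ u ∈ S.filter (fun u => w u = l), p u with hBmdef
    have hsplit : ∑ u ∈ S.filter (fun u => l ≤ w u), p u = A + Bm := by
      rw [hAdef, hBmdef, Finset.sum_filter, Finset.sum_filter, Finset.sum_filter,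
        ← Finset.sum_add_distrib]
      apply Finset.sum_congr rfl
      intro u _
      rcases lt_trichotomy l (w u) with h | h | h
      · rw [if_pos h.le, if_pos h, if_neg (by linarith), add_zero]
      · rw [if_pos h.le, if_neg (by linarith), if_pos h.symm, zero_add]
      · rw [if_neg (by linarith), if_neg (by linarith), if_neg (by linarith), add_zero]
    have hBmpos : 0 < Bm := by rw [hsplit] at hB; linarith
    set r : ℝ := (b - A) / Bm with hrdef
    have hr0 : 0 ≤ r := div_nonneg (by linarith) hBmpos.le
    have hr1 : r ≤ 1 := by
      rw [hrdef, div_le_one hBmpos]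
      rw [hsplit] at hB
      linarith
    set q : U → ℝ := fun u => if l < w u then 1 else if w u = l then r else 0 with hqdef
    have hq01 : ∀ u, q u ∈ Set.Icc (0 : ℝ) 1 := by
      intro u; rw [hqdef]; dsimp only
      split
      · simp
      · split
        · exact ⟨hr0, hr1⟩
        · simp
    have hsumq : ∑ u ∈ S, p u * q u = A + r * Bm := by
      have : ∀ u ∈ S, p u * q u
          = (if l < w u then p u else 0) + (if w u = l then r * p u else 0) := by
        intro u _
        rw [hqdef]; dsimp only
        rcases lt_trichotomy l (w u) with h | h | h
        · rw [if_pos h, if_pos h, if_neg (by linarith), mul_one, add_zero]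
        · rw [if_neg (by linarith), if_pos h.symm, if_neg (by linarith), if_pos h.symm,
            zero_add]; ring
        · rw [if_neg (by linarith), if_neg (by linarith), if_neg (by linarith),
            if_neg (by linarith), mul_zero, add_zero]
      rw [Finset.sum_congr rfl this, Finset.sum_add_distrib]
      congr 1
      · rw [hAdef, Finset.sum_filter]
      · rw [hBmdef, Finset.mul_sum, Finset.sum_filter]
    have hbud : ∑ u ∈ S, p u * q u ≤ b := by
      rw [hsumq, hrdef, div_mul_cancel₀ _ hBmpos.ne']
      linarith
    have hval : ∑ u ∈ S, p u * q u * w u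
        = (∑ u ∈ S.filter (fun u => l < w u), p u * w u) + r * l * Bm := by
      have : ∀ u ∈ S, p u * q u * w u
          = (if l < w u then p u * w u else 0) + (if w u = l then r * l * p u else 0) := by
        intro u _
        rw [hqdef]; dsimp only
        rcases lt_trichotomy l (w u) with h | h | h
        · rw [if_pos h, if_pos h, if_neg (by linarith), mul_one, add_zero]
        · rw [if_neg (by linarith), if_pos h.symm, if_neg (by linarith), if_pos h.symm, h.symm,
            zero_add]; ring
        · rw [if_neg (by linarith), if_neg (by linarith), if_neg (by linarith),
            if_neg (by linarith), mul_zero, zero_mul, add_zero]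
      rw [Finset.sum_congr rfl this, Finset.sum_add_distrib]
      congr 1
      · rw [Finset.sum_filter]
      · rw [hBmdef, Finset.mul_sum, Finset.sum_filter]
    refine ⟨l, hl0, ?_⟩
    have hmem : (∑ u ∈ S, p u * q u * w u) ∈ {v | ∃ q : U → ℝ,
        (∀ u, q u ∈ Set.Icc (0 : ℝ) 1) ∧
        (∑ u ∈ S, p u * q u) ≤ b ∧ v = ∑ u ∈ S, p u * q u * w u} :=
      ⟨q, hq01, hbud, rfl⟩
    have hle := le_csSup (knap_bddAbove S p w b hp hw) hmem
    rw [hval] at hle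
    rw [hdual_eq, knap]
    have hrBm : r * Bm = b - A := by
      rw [hrdef, div_mul_cancel₀ _ hBmpos.ne']
    have hrlBm : r * l * Bm = l * (b - A) := by
      rw [mul_comm r l, mul_assoc, hrBm]
    linarith

/-- Lemma 2: for any fixed budget `b ≥ 0`, the fractional knapsack value
`T ↦ O(T, b)` is submodular: for distinct `x, y ∉ T`,
`O(T∪{x}, b) − O(T, b) ≥ O(T∪{x,y}, b) − O(T∪{y}, b)`. -/
theorem knap_submodular {U : Type*} [DecidableEq U] (T : Finset U) (x y : U)
    (hx : x ∉ T) (hy : y ∉ T) (hxy : x ≠ y) (p w : U → ℝ)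
    (hp : ∀ u, p u ∈ Set.Ioc (0 : ℝ) 1) (hw : ∀ u, 0 ≤ w u)
    (b : ℝ) (hb : 0 ≤ b) :
    knap (insert x (insert y T)) p w b - knap (insert y T) p w b ≤
      knap (insert x T) p w b - knap T p w b := by
  have hppos : ∀ u, 0 < p u := fun u => (hp u).1
  obtain ⟨l1, hl1, hd1⟩ := exists_hdual_le_knap (insert x T) p w b hppos hw hb
  obtain ⟨l2, hl2, hd2⟩ := exists_hdual_le_knap (insert y T) p w b hppos hw hb
  set M := max l1 l2 with hM
  set m := min l1 l2 with hm
  have hM0 : 0 ≤ M := le_trans hl1 (le_max_left _ _)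
  have hm0 : 0 ≤ m := le_min hl1 hl2
  have hxyT : x ∉ insert y T := by
    simp [Finset.mem_insert, hxy, hx]
  have hbig : knap (insert x (insert y T)) p w b ≤ hdual (insert x (insert y T)) p w b M :=
    knap_le_hdual _ p w b hppos hb hM0
  have hsmall : knap T p w b ≤ hdual T p w b m :=
    knap_le_hdual _ p w b hppos hb hm0
  -- expand the dual objectives
  have e1 : hdual (insert x T) p w b l1
      = l1 * b + p x * max (w x - l1) 0 + ∑ u ∈ T, p u * max (w u - l1) 0 := by
    rw [hdual, Finset.sum_insert hx]; ring
  have e2 : hdual (insert y T) p w b l2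
      = l2 * b + p y * max (w y - l2) 0 + ∑ u ∈ T, p u * max (w u - l2) 0 := by
    rw [hdual, Finset.sum_insert hy]; ring
  have e3 : hdual (insert x (insert y T)) p w b M
      = M * b + p x * max (w x - M) 0 + p y * max (w y - M) 0
        + ∑ u ∈ T, p u * max (w u - M) 0 := by
    rw [hdual, Finset.sum_insert hxyT, Finset.sum_insert hy]; ring
  have e4 : hdual T p w b m = m * b + ∑ u ∈ T, p u * max (w u - m) 0 := by
    rw [hdual]
  -- the multiset identity {M, m} = {l1, l2}
  have hkey : hdual (insert x (insert y T)) p w b M + hdual T p w b m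
      ≤ hdual (insert x T) p w b l1 + hdual (insert y T) p w b l2 := by
    have hMm : (M = l1 ∧ m = l2) ∨ (M = l2 ∧ m = l1) := by
      rcases le_total l1 l2 with h | h
      · exact Or.inr ⟨max_eq_right h, min_eq_left h⟩
      · exact Or.inl ⟨max_eq_left h, min_eq_right h⟩
    have hx_le : p x * max (w x - M) 0 ≤ p x * max (w x - l1) 0 := by
      apply mul_le_mul_of_nonneg_left _ (hppos x).le
      have h1 : l1 ≤ M := le_max_left _ _
      exact max_le_max (by linarith) le_rfl
    have hy_le : p y * max (w y - M) 0 ≤ p y * max (w y - l2) 0 := by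
      apply mul_le_mul_of_nonneg_left _ (hppos y).le
      have h1 : l2 ≤ M := le_max_right _ _
      exact max_le_max (by linarith) le_rfl
    have hsum_eq : (∑ u ∈ T, p u * max (w u - M) 0) + ∑ u ∈ T, p u * max (w u - m) 0
        = (∑ u ∈ T, p u * max (w u - l1) 0) + ∑ u ∈ T, p u * max (w u - l2) 0 := by
      rcases hMm with ⟨h1, h2⟩ | ⟨h1, h2⟩ <;> rw [h1, h2] <;> ring
    have hb_eq : M * b + m * b = l1 * b + l2 * b := by
      rcases hMm with ⟨h1, h2⟩ | ⟨h1, h2⟩ <;> rw [h1, h2] <;> ring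
    rw [e1, e2, e3, e4]
    linarith
  linarith
end

section
/- If (S, q) is an α-approximate solution to the non-adaptive relaxation and there is a feasible randomized second-stage selection scheme producing, for each realization R, a set Ĩ_R with |Ĩ_R| ≤ k − |S| and E_R[f(Ĩ_R)] ≥ F(p⊗q), then the adaptive value A(S) = Σ_{R⊆N(S)} p_R max_{T⊆R,|T|≤k−|S|} f(T) satisfies A(S) ≥ α·OPT_A, where OPT_A is the optimal adaptive value. -/
open Finset

/-- Value of the best subset of `R` of cardinality at most `b` under additive weights `w`. -/
noncomputable def amax {U : Type*} [DecidableEq U] (w : U → ℝ) (R : Finset U) (b : ℕ) : ℝ :=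
  (R.powerset.filter fun T => T.card ≤ b).sup' ⟨∅, by simp⟩ (fun T => ∑ u ∈ T, w u)

section AuxLemmas
variable {U : Type*} [DecidableEq U]

lemma sum_PR (A : Finset U) (p : U → ℝ) :
    ∑ R ∈ A.powerset, (∏ u ∈ R, p u) * ∏ u ∈ A \ R, (1 - p u) = 1 := by
  rw [← Finset.prod_add]
  simp

lemma PR_nonneg {A : Finset U} {p : U → ℝ} (hp : ∀ u, p u ∈ Set.Icc (0:ℝ) 1)
    (R : Finset U) : 0 ≤ (∏ u ∈ R, p u) * ∏ u ∈ A \ R, (1 - p u) :=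
  mul_nonneg (prod_nonneg fun u _ => (hp u).1)
    (prod_nonneg fun u _ => by linarith [(hp u).2])

lemma marg (A : Finset U) (p : U → ℝ) (u : U) (hu : u ∈ A) :
    ∑ R ∈ A.powerset.filter (fun R => u ∈ R),
      (∏ v ∈ R, p v) * ∏ v ∈ A \ R, (1 - p v) = p u := by
  have key : A.powerset.filter (fun R => u ∈ R) = (A.erase u).powerset.image (insert u) := by
    ext R
    simp only [mem_filter, mem_powerset, mem_image]
    constructor
    · rintro ⟨hRA, huR⟩
      exact ⟨R.erase u, fun x hx => mem_erase.mpr ⟨(mem_erase.mp hx).1, hRA (mem_erase.mp hx).2⟩,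
        by rw [insert_erase huR]⟩
    · rintro ⟨R', hR', rfl⟩
      refine ⟨insert_subset (by exact hu) (fun x hx => (erase_subset u A) (hR' hx)), mem_insert_self _ _⟩
  rw [key, Finset.sum_image]
  · have : ∀ R' ∈ (A.erase u).powerset,
        (∏ v ∈ insert u R', p v) * ∏ v ∈ A \ insert u R', (1 - p v)
        = p u * ((∏ v ∈ R', p v) * ∏ v ∈ (A.erase u) \ R', (1 - p v)) := by
      intro R' hR'
      have huR' : u ∉ R' := fun h => (mem_erase.mp (mem_powerset.mp hR' h)).1 rfl
      have hsd : A \ insert u R' = (A.erase u) \ R' := by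
        ext x
        simp only [mem_sdiff, mem_insert, mem_erase, not_or]
        tauto
      rw [prod_insert huR', hsd]; ring
    rw [Finset.sum_congr rfl this, ← Finset.mul_sum, sum_PR, mul_one]
  · intro a ha b hb hab
    have hau : u ∉ a := fun h => (mem_erase.mp (mem_powerset.mp ha h)).1 rfl
    have hbu : u ∉ b := fun h => (mem_erase.mp (mem_powerset.mp hb h)).1 rfl
    rw [← erase_insert hau, ← erase_insert hbu, hab]

end AuxLemmas

/-- Proposition 2: if `(S, q)` is an `α`-approximate solution to the
non-adaptive relaxation and there is a feasible randomized second-stage scheme `μ`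
producing, for each realization `R`, sets of cardinality at most `k − |S|` whose expected
additive value is at least the non-adaptive objective `F(p⊗q) = Σ_u p_u q_u w_u`, then the
adaptive value `A(S)` satisfies `A(S) ≥ α · OPT_A`. -/
theorem nonadaptive_approx_gives_adaptive_approx {V U : Type*} [DecidableEq V] [DecidableEq U]
    (X : Finset V) (Nb : V → Finset U) (p w : U → ℝ)
    (hp : ∀ u, p u ∈ Set.Icc (0 : ℝ) 1) (hw : ∀ u, 0 ≤ w u)
    (k : ℕ) (α : ℝ) (hα : α ∈ Set.Icc (0 : ℝ) 1)
    (S : Finset V) (hS : S ⊆ X) (hcard : S.card ≤ k)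
    -- (S, q) is a feasible non-adaptive solution
    (q : U → ℝ) (hq : ∀ u, q u ∈ Set.Icc (0 : ℝ) 1)
    (hq0 : ∀ u ∉ S.biUnion Nb, q u = 0)
    (hfeas : (S.card : ℝ) + ∑ u ∈ X.biUnion Nb, p u * q u ≤ (k : ℝ))
    -- (S, q) is α-approximate: its value is at least α · OPT_NA
    (happrox : α * sSup {v | ∃ S' : Finset V, S' ⊆ X ∧ ∃ q' : U → ℝ,
        (∀ u, q' u ∈ Set.Icc (0 : ℝ) 1) ∧ (∀ u ∉ S'.biUnion Nb, q' u = 0) ∧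
        (S'.card : ℝ) + ∑ u ∈ X.biUnion Nb, p u * q' u ≤ (k : ℝ) ∧
        v = ∑ u ∈ X.biUnion Nb, p u * q' u * w u}
      ≤ ∑ u ∈ X.biUnion Nb, p u * q u * w u)
    -- a feasible randomized second-stage selection scheme μ (contention resolution)
    (μ : Finset U → Finset U → ℝ)
    (hμ0 : ∀ R I, 0 ≤ μ R I)
    (hμ1 : ∀ R ∈ (S.biUnion Nb).powerset, ∑ I ∈ R.powerset, μ R I = 1)
    (hμsupp : ∀ R ∈ (S.biUnion Nb).powerset, ∀ I ∈ R.powerset,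
      μ R I ≠ 0 → I.card ≤ k - S.card)
    -- its expected value dominates the non-adaptive objective F(p⊗q)
    (hE : ∑ u ∈ X.biUnion Nb, p u * q u * w u ≤
      ∑ R ∈ (S.biUnion Nb).powerset,
        ((∏ u ∈ R, p u) * ∏ u ∈ S.biUnion Nb \ R, (1 - p u)) *
          ∑ I ∈ R.powerset, μ R I * ∑ u ∈ I, w u) :
    -- conclusion: A(S) ≥ α · OPT_A
    α * ((X.powerset.filter fun S' => S'.card ≤ k).sup' ⟨∅, by simp⟩
        (fun S' => ∑ R ∈ (S'.biUnion Nb).powerset,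
          ((∏ u ∈ R, p u) * ∏ u ∈ S'.biUnion Nb \ R, (1 - p u)) * amax w R (k - S'.card)))
      ≤ ∑ R ∈ (S.biUnion Nb).powerset,
          ((∏ u ∈ R, p u) * ∏ u ∈ S.biUnion Nb \ R, (1 - p u)) * amax w R (k - S.card) := by
  classical
  have hα0 : (0:ℝ) ≤ α := hα.1
  set NS := S.biUnion Nb with hNS
  -- Step 1: expected value of the scheme is at most A(S)
  have hEA : ∑ R ∈ NS.powerset,
      ((∏ u ∈ R, p u) * ∏ u ∈ NS \ R, (1 - p u)) * ∑ I ∈ R.powerset, μ R I * ∑ u ∈ I, w u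
      ≤ ∑ R ∈ NS.powerset,
      ((∏ u ∈ R, p u) * ∏ u ∈ NS \ R, (1 - p u)) * amax w R (k - S.card) := by
    apply Finset.sum_le_sum
    intro R hR
    apply mul_le_mul_of_nonneg_left _ (PR_nonneg hp R)
    calc ∑ I ∈ R.powerset, μ R I * ∑ u ∈ I, w u
        ≤ ∑ I ∈ R.powerset, μ R I * amax w R (k - S.card) := by
          apply Finset.sum_le_sum
          intro I hI
          by_cases h : μ R I = 0
          · simp [h]
          · apply mul_le_mul_of_nonneg_left _ (hμ0 R I)
            exact Finset.le_sup' (f := fun T => ∑ u ∈ T, w u)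
              (mem_filter.mpr ⟨hI, hμsupp R hR I hI h⟩)
      _ = amax w R (k - S.card) := by
          rw [← Finset.sum_mul, hμ1 R hR, one_mul]
  -- the set of non-adaptive values is bounded above
  set Sval : Set ℝ := {v | ∃ S' : Finset V, S' ⊆ X ∧ ∃ q' : U → ℝ,
        (∀ u, q' u ∈ Set.Icc (0 : ℝ) 1) ∧ (∀ u ∉ S'.biUnion Nb, q' u = 0) ∧
        (S'.card : ℝ) + ∑ u ∈ X.biUnion Nb, p u * q' u ≤ (k : ℝ) ∧
        v = ∑ u ∈ X.biUnion Nb, p u * q' u * w u} with hSval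
  have hbdd : BddAbove Sval := by
    refine ⟨∑ u ∈ X.biUnion Nb, w u, ?_⟩
    rintro v ⟨S', _, q', hq', _, _, rfl⟩
    apply Finset.sum_le_sum
    intro u _
    have h1 : p u * q' u ≤ 1 := mul_le_one₀ (hp u).2 (hq' u).1 (hq' u).2
    calc p u * q' u * w u ≤ 1 * w u := mul_le_mul_of_nonneg_right h1 (hw u)
      _ = w u := one_mul _
  -- Step 2: each feasible S' has adaptive value ≤ sSup Sval
  have hOPT : ∀ S' ∈ X.powerset.filter fun S' => S'.card ≤ k,
      (∑ R ∈ (S'.biUnion Nb).powerset,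
        ((∏ u ∈ R, p u) * ∏ u ∈ S'.biUnion Nb \ R, (1 - p u)) * amax w R (k - S'.card))
      ≤ sSup Sval := by
    intro S' hS'
    obtain ⟨hS'X, hS'k⟩ : S' ⊆ X ∧ S'.card ≤ k := by
      have := mem_filter.mp hS'
      exact ⟨mem_powerset.mp this.1, this.2⟩
    set A' := S'.biUnion Nb with hA'
    set b := k - S'.card with hb
    set P : Finset U → ℝ := fun R => (∏ u ∈ R, p u) * ∏ u ∈ A' \ R, (1 - p u) with hP
    have hT : ∀ R : Finset U, ∃ T ∈ R.powerset.filter fun T => T.card ≤ b,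
        amax w R b = ∑ u ∈ T, w u := fun R =>
      Finset.exists_mem_eq_sup' ⟨∅, by simp⟩ _
    choose T hTmem hTval using hT
    have hTsub : ∀ R, T R ⊆ R := fun R => mem_powerset.mp (mem_filter.mp (hTmem R)).1
    have hTcard : ∀ R, (T R).card ≤ b := fun R => (mem_filter.mp (hTmem R)).2
    set N : U → ℝ := fun u => ∑ R ∈ A'.powerset.filter (fun R => u ∈ T R), P R with hN
    set q' : U → ℝ := fun u => if p u = 0 then 0 else N u / p u with hq'def
    have hN0 : ∀ u, 0 ≤ N u := fun u =>
      Finset.sum_nonneg fun R _ => PR_nonneg hp R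
    have hNle : ∀ u, N u ≤ ∑ R ∈ A'.powerset.filter (fun R => u ∈ R), P R := by
      intro u
      apply Finset.sum_le_sum_of_subset_of_nonneg
      · intro R hR
        rw [mem_filter] at hR ⊢
        exact ⟨hR.1, hTsub R hR.2⟩
      · intro R _ _; exact PR_nonneg hp R
    have hNp : ∀ u ∈ A', N u ≤ p u := by
      intro u hu
      calc N u ≤ ∑ R ∈ A'.powerset.filter (fun R => u ∈ R), P R := hNle u
        _ = p u := marg A' p u hu
    have hNout : ∀ u ∉ A', N u = 0 := by
      intro u hu
      apply Finset.sum_eq_zero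
      intro R hR
      exact absurd ((mem_powerset.mp (mem_filter.mp hR).1) (hTsub R (mem_filter.mp hR).2)) hu
    have hpq' : ∀ u, p u * q' u = N u := by
      intro u
      by_cases h : p u = 0
      · simp only [hq'def, if_pos h, h, zero_mul]
        symm
        apply Finset.sum_eq_zero
        intro R hR
        have huR : u ∈ R := hTsub R (mem_filter.mp hR).2
        simp only [hP]
        rw [Finset.prod_eq_zero huR h, zero_mul]
      · simp only [hq'def, if_neg h]
        field_simp
    have hq'Icc : ∀ u, q' u ∈ Set.Icc (0:ℝ) 1 := by
      intro u
      by_cases h : p u = 0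
      · simp [hq'def, h]
      · have hppos : 0 < p u := lt_of_le_of_ne (hp u).1 (Ne.symm h)
        constructor
        · simp only [hq'def, if_neg h]
          exact div_nonneg (hN0 u) hppos.le
        · simp only [hq'def, if_neg h]
          rw [div_le_one hppos]
          by_cases hu : u ∈ A'
          · exact hNp u hu
          · rw [hNout u hu]; exact hppos.le
    have hq'0 : ∀ u ∉ A', q' u = 0 := by
      intro u hu
      by_cases h : p u = 0
      · simp [hq'def, h]
      · simp [hq'def, h, hNout u hu]
    have hA'X : A' ⊆ X.biUnion Nb := biUnion_subset_biUnion_of_subset_left Nb hS'X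
    -- sums over X.biUnion Nb reduce to sums over A'
    have hred : ∀ g : U → ℝ, ∑ u ∈ X.biUnion Nb, p u * q' u * g u = ∑ u ∈ A', N u * g u := by
      intro g
      rw [← Finset.sum_subset hA'X (fun u _ hu => by rw [hq'0 u hu]; ring)]
      exact Finset.sum_congr rfl fun u _ => by rw [hpq' u]
    -- swap sums
    have hswap : ∀ g : U → ℝ, ∑ u ∈ A', N u * g u
        = ∑ R ∈ A'.powerset, P R * ∑ u ∈ T R, g u := by
      intro g
      simp only [hN, Finset.sum_mul, Finset.sum_filter]
      rw [Finset.sum_comm]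
      apply Finset.sum_congr rfl
      intro R hR
      rw [Finset.mul_sum]
      simp only [ite_mul, zero_mul]
      rw [← Finset.sum_filter]
      have : A'.filter (fun u => u ∈ T R) = T R := by
        ext x
        simp only [mem_filter]
        exact ⟨fun h => h.2, fun h => ⟨(mem_powerset.mp hR) (hTsub R h), h⟩⟩
      rw [this]
    -- feasibility of (S', q')
    have hfeas' : (S'.card : ℝ) + ∑ u ∈ X.biUnion Nb, p u * q' u ≤ (k : ℝ) := by
      have h1 : ∑ u ∈ X.biUnion Nb, p u * q' u = ∑ R ∈ A'.powerset, P R * (T R).card := by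
        have e1 : ∑ u ∈ X.biUnion Nb, p u * q' u
            = ∑ u ∈ X.biUnion Nb, p u * q' u * (fun _ => (1:ℝ)) u := by simp
        rw [e1, hred, hswap]
        simp
      rw [h1]
      have h2 : ∑ R ∈ A'.powerset, P R * (T R).card ≤ ∑ R ∈ A'.powerset, P R * b := by
        apply Finset.sum_le_sum
        intro R _
        apply mul_le_mul_of_nonneg_left _ (PR_nonneg hp R)
        exact_mod_cast hTcard R
      have h3 : ∑ R ∈ A'.powerset, P R * b = b := by
        rw [← Finset.sum_mul, sum_PR, one_mul]
      have h4 : (S'.card : ℝ) + b = k := by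
        have : S'.card + b = k := by omega
        exact_mod_cast this
      linarith
    -- value of (S', q') equals adaptive value of S'
    have hval : ∑ u ∈ X.biUnion Nb, p u * q' u * w u
        = ∑ R ∈ A'.powerset, P R * amax w R b := by
      rw [hred w, hswap w]
      exact Finset.sum_congr rfl fun R _ => by rw [hTval R]
    apply le_csSup hbdd
    exact ⟨S', hS'X, q', hq'Icc, hq'0, hfeas', hval.symm⟩
  -- combine
  have hsup : ((X.powerset.filter fun S' => S'.card ≤ k).sup' ⟨∅, by simp⟩
      (fun S' => ∑ R ∈ (S'.biUnion Nb).powerset,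
        ((∏ u ∈ R, p u) * ∏ u ∈ S'.biUnion Nb \ R, (1 - p u)) * amax w R (k - S'.card)))
      ≤ sSup Sval := Finset.sup'_le _ _ hOPT
  calc α * _ ≤ α * sSup Sval := mul_le_mul_of_nonneg_left hsup hα0
    _ ≤ ∑ u ∈ X.biUnion Nb, p u * q u * w u := happrox
    _ ≤ _ := hE
    _ ≤ _ := hEA
end
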